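/- Let Z₁, Z₂ ∈ ℝ^{d×n} and suppose ΔR(Z₁, Z₂) = 0, where ΔR is the rate reduction difference measure with parameter ε > 0. Then Col(Z₁) = Col(Z₂). -/

import Mathlib

open Matrix

noncomputable def codingRate {d : ℕ} {m : Type*} [Fintype m] (ε : ℝ)
    (Z : Matrix (Fin d) m ℝ) : ℝ :=
  (1 / 2) * Real.log ((1 + ((d : ℝ) / (Fintype.card m * ε ^ 2)) • (Z * Zᵀ)).det)

noncomputable def deltaR {d n : ℕ} (ε : ℝ) (Z₁ Z₂ : Matrix (Fin d) (Fin n) ℝ) : ℝ :=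
  codingRate ε (fromCols Z₁ Z₂) - (1 / 2) * codingRate ε Z₁ - (1 / 2) * codingRate ε Z₂

noncomputable def sval {d n : ℕ} (A : Matrix (Fin d) (Fin n) ℝ) : Fin n → ℝ :=
  fun p => Real.sqrt ((show (Aᵀ * A).IsHermitian from Matrix.isHermitian_conjTranspose_mul_self A).eigenvalues
    (Tuple.sort ((show (Aᵀ * A).IsHermitian from Matrix.isHermitian_conjTranspose_mul_self A).eigenvalues) p.rev))

noncomputable def colSpan {d n : ℕ} (A : Matrix (Fin d) (Fin n) ℝ) :
    Submodule ℝ (Fin d → ℝ) :=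
  Submodule.span ℝ (Set.range Aᵀ)

/-! Put `c = d/(nε²)`, `P = 1 + c Z₁Z₁ᵀ` and `Q = 1 + c Z₂Z₂ᵀ`. Since
`[Z₁ Z₂][Z₁ Z₂]ᵀ = Z₁Z₁ᵀ + Z₂Z₂ᵀ` and the concatenation has `2n` columns, `ΔR = 0` says
`det((P + Q)/2)² = det P · det Q`. Writing `P = SᵀS` and `Q = SᵀMS`, this becomes
`det((1 + M)/2)² = det M`, i.e. `∏ ((1 + μᵢ)/2)² = ∏ μᵢ` over the eigenvalues `μᵢ ≥ 0` of `M`.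
By AM-GM every `μᵢ = 1`, so `M = 1`, `P = Q` and `Z₁Z₁ᵀ = Z₂Z₂ᵀ`; finally `Z` and `ZZᵀ` have
the same range. -/

lemma eq_one_of_prod_sq_half_one_add_eq_prod {ι : Type*} [Fintype ι] {μ : ι → ℝ}
    (hμ : ∀ i, 0 ≤ μ i) (h : ∏ i, ((1 + μ i) / 2) ^ 2 = ∏ i, μ i) (i : ι) : μ i = 1 := by
  have hpos : ∀ j, 0 < μ j := by
    intro j
    refine (hμ j).lt_of_ne fun hj => ?_
    have : ∏ i, ((1 + μ i) / 2) ^ 2 ≠ 0 :=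
      Finset.prod_ne_zero_iff.mpr fun k _ => by have := hμ k; positivity
    exact this (h.trans (Finset.prod_eq_zero (Finset.mem_univ j) hj.symm))
  by_contra hi
  -- AM-GM: `μ ≤ ((1 + μ) / 2) ^ 2`, strictly unless `μ = 1`.
  refine h.not_gt (Finset.prod_lt_prod (fun j _ => hpos j) (fun j _ => ?_)
    ⟨i, Finset.mem_univ i, ?_⟩)
  · nlinarith [sq_nonneg (1 - μ j)]
  · nlinarith [sq_pos_of_ne_zero (sub_ne_zero.mpr hi)]

lemma sq_eq_mul_of_log_eq_half_add_half {x y z : ℝ} (hx : 0 < x) (hy : 0 < y) (hz : 0 < z)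
    (h : Real.log x = (1 / 2) * Real.log y + (1 / 2) * Real.log z) : x ^ 2 = y * z := by
  refine Real.log_injOn_pos (pow_pos hx 2) (mul_pos hy hz) ?_
  rw [Real.log_pow, Real.log_mul hy.ne' hz.ne', h]
  ring

namespace Matrix

section Square

variable {ι : Type*} [Fintype ι] [DecidableEq ι]

lemma IsHermitian.det_smul_one_add {M : Matrix ι ι ℝ} (hM : M.IsHermitian) (a : ℝ) :
    (a • (1 + M)).det = ∏ i, a * (1 + hM.eigenvalues i) := by
  set U := hM.eigenvectorUnitary
  have hD : a • (1 + diagonal (RCLike.ofReal ∘ hM.eigenvalues)) =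
      diagonal fun i => a * (1 + hM.eigenvalues i) := by
    rw [← diagonal_one, diagonal_add, ← diagonal_smul]; rfl
  conv_lhs => rw [hM.spectral_theorem, ← map_one (Unitary.conjStarAlgAut ℝ _ U), ← map_add,
    ← map_smul, Unitary.conjStarAlgAut_apply, det_mul_right_comm, Unitary.mul_star_self_of_mem U.2]
  rw [one_mul, hD, det_diagonal]

lemma IsHermitian.eq_one_of_eigenvalues_eq_one {M : Matrix ι ι ℝ} (hM : M.IsHermitian)
    (h : ∀ i, hM.eigenvalues i = 1) : M = 1 := by
  rw [hM.spectral_theorem, show hM.eigenvalues = 1 from funext h]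
  simp

lemma PosSemidef.eq_one_of_det_half_smul_one_add_sq_eq_det {M : Matrix ι ι ℝ}
    (hM : M.PosSemidef) (h : ((1 / 2 : ℝ) • (1 + M)).det ^ 2 = M.det) : M = 1 := by
  refine hM.isHermitian.eq_one_of_eigenvalues_eq_one
    (eq_one_of_prod_sq_half_one_add_eq_prod hM.eigenvalues_nonneg ?_)
  rw [hM.isHermitian.det_smul_one_add, hM.isHermitian.det_eq_prod_eigenvalues,
    ← Finset.prod_pow] at h
  simpa [div_eq_inv_mul] using h

open scoped MatrixOrder in
lemma PosDef.eq_of_det_half_smul_add_sq_eq_mul {P Q : Matrix ι ι ℝ} (hP : P.PosDef)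
    (hQ : Q.PosDef) (h : ((1 / 2 : ℝ) • (P + Q)).det ^ 2 = P.det * Q.det) : P = Q := by
  obtain ⟨S, rfl⟩ : ∃ S : Matrix ι ι ℝ, P = Sᴴ * S :=
    ⟨CFC.sqrt P, by rw [(CFC.sqrt_nonneg P).posSemidef.1.eq,
      CFC.sqrt_mul_sqrt_self P hP.posSemidef.nonneg]⟩
  have hP₀ : (Sᴴ * S).det ≠ 0 := hP.det_pos.ne'
  have hS : IsUnit S.det := (right_ne_zero_of_mul (det_mul Sᴴ S ▸ hP₀)).isUnit
  obtain ⟨M, hM, hQM⟩ : ∃ M : Matrix ι ι ℝ, M.PosSemidef ∧ Q = Sᴴ * M * S := by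
    refine ⟨(S⁻¹)ᴴ * Q * S⁻¹, hQ.posSemidef.conjTranspose_mul_mul_same S⁻¹, ?_⟩
    rw [conjTranspose_nonsing_inv]
    simp only [Matrix.mul_assoc, nonsing_inv_mul _ hS, Matrix.mul_one]
    rw [← Matrix.mul_assoc, mul_nonsing_inv _ (by simpa using hS), Matrix.one_mul]
  have hdetQ : Q.det = (Sᴴ * S).det * M.det := by
    rw [hQM, det_mul, det_mul, det_mul]; ring
  have hdet_avg : ((1 / 2 : ℝ) • (Sᴴ * S + Q)).det =
      (Sᴴ * S).det * ((1 / 2 : ℝ) • (1 + M)).det := by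
    have : (1 / 2 : ℝ) • (Sᴴ * S + Q) = Sᴴ * ((1 / 2 : ℝ) • (1 + M)) * S := by
      rw [hQM, Matrix.mul_smul, Matrix.smul_mul, Matrix.mul_add, Matrix.add_mul, Matrix.mul_one]
    rw [this, det_mul, det_mul, det_mul]; ring
  have hM₁ : M = 1 := by
    refine hM.eq_one_of_det_half_smul_one_add_sq_eq_det
      (mul_left_cancel₀ (pow_ne_zero 2 hP₀) ?_)
    rw [hdet_avg, hdetQ] at h
    linear_combination h
  rw [hQM, hM₁, Matrix.mul_one]

end Square

lemma posDef_one_add_smul_mul_transpose {m n : Type*} [Fintype m] [Fintype n] [DecidableEq m]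
    {c : ℝ} (hc : 0 ≤ c) (Z : Matrix m n ℝ) : (1 + c • (Z * Zᵀ)).PosDef :=
  PosDef.one.add_posSemidef ((posSemidef_self_mul_conjTranspose Z).smul hc)

lemma range_mulVecLin_mul_transpose {m n R : Type*} [Fintype m] [Fintype n]
    [DecidableEq n] [Field R] [LinearOrder R] [IsStrictOrderedRing R] (Z : Matrix m n R) :
    LinearMap.range (Z * Zᵀ).mulVecLin = LinearMap.range Z.mulVecLin := by
  apply Submodule.eq_of_le_of_finrank_eq
  · rw [mulVecLin_mul]
    exact LinearMap.range_comp_le_range _ _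
  · simpa [Matrix.rank] using Z.rank_self_mul_transpose

end Matrix

lemma colSpan_eq_range_mulVecLin {d n : ℕ} (Z : Matrix (Fin d) (Fin n) ℝ) :
    colSpan Z = LinearMap.range Z.mulVecLin :=
  (Matrix.range_mulVecLin Z).symm

lemma colSpan_eq_of_mul_transpose_eq {d n : ℕ} {Z₁ Z₂ : Matrix (Fin d) (Fin n) ℝ}
    (h : Z₁ * Z₁ᵀ = Z₂ * Z₂ᵀ) : colSpan Z₁ = colSpan Z₂ := by
  rw [colSpan_eq_range_mulVecLin, colSpan_eq_range_mulVecLin,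
    ← Z₁.range_mulVecLin_mul_transpose, h, Z₂.range_mulVecLin_mul_transpose]

lemma deltaR_eq_log_det {d n : ℕ} {ε c : ℝ} (hc : (d : ℝ) / (n * ε ^ 2) = c)
    (Z₁ Z₂ : Matrix (Fin d) (Fin n) ℝ) :
    deltaR ε Z₁ Z₂ = (1 / 2) * Real.log ((1 / 2 : ℝ) •
        ((1 + c • (Z₁ * Z₁ᵀ)) + (1 + c • (Z₂ * Z₂ᵀ)))).det
      - (1 / 4) * Real.log (1 + c • (Z₁ * Z₁ᵀ)).det
      - (1 / 4) * Real.log (1 + c • (Z₂ * Z₂ᵀ)).det := by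
  have hc₂ : (d : ℝ) / (Fintype.card (Fin n ⊕ Fin n) * ε ^ 2) = c / 2 := by
    rw [← hc, Fintype.card_sum, Fintype.card_fin, Nat.cast_add, div_div]
    ring_nf
  have hsum : (1 : Matrix (Fin d) (Fin d) ℝ) + (c / 2) • (Z₁ * Z₁ᵀ + Z₂ * Z₂ᵀ) =
      (1 / 2 : ℝ) • ((1 + c • (Z₁ * Z₁ᵀ)) + (1 + c • (Z₂ * Z₂ᵀ))) := by
    module
  simp only [deltaR, codingRate, transpose_fromCols, fromCols_mul_fromRows, hc₂, hsum,
    Fintype.card_fin, hc]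
  ring

/-- ΔR(Z₁, Z₂) = 0 implies Col(Z₁) = Col(Z₂). -/
theorem stmt8 {d n : ℕ} (ε : ℝ) (hε : 0 < ε)
    (Z₁ Z₂ : Matrix (Fin d) (Fin n) ℝ) (h : deltaR ε Z₁ Z₂ = 0) :
    colSpan Z₁ = colSpan Z₂ := by
  apply colSpan_eq_of_mul_transpose_eq
  rcases eq_or_ne n 0 with rfl | hn
  · simp
  rcases eq_or_ne d 0 with rfl | hd
  · exact Subsingleton.elim _ _
  set c : ℝ := d / (n * ε ^ 2) with hc_def
  have hc : 0 < c := by positivity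
  have hP := Matrix.posDef_one_add_smul_mul_transpose hc.le Z₁
  have hQ := Matrix.posDef_one_add_smul_mul_transpose hc.le Z₂
  have hdet := sq_eq_mul_of_log_eq_half_add_half
    ((hP.add hQ).smul (by norm_num : (0 : ℝ) < 1 / 2)).det_pos hP.det_pos hQ.det_pos
    (by linarith [deltaR_eq_log_det hc_def.symm Z₁ Z₂])
  have hPQ := hP.eq_of_det_half_smul_add_sq_eq_mul hQ hdet
  exact smul_right_injective _ hc.ne' (add_left_cancel hPQ)
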